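/- arXiv:2010.09307 — 2 statements merged into one kernel-verified Lean document; each statement's English description precedes it below -/
import Mathlib

section
/- For each i ∈ {2,3,4}, the function ψ̂_i defined by the recursion ψ̂_i(s,t) := (d(t)−s) ψ̂_{i−1}(s,t) + 2εt(i−1) ψ̂_{i−2}(s,t) satisfies ∂ψ̂_i/∂s(s,t) = −i ψ̂_{i−1}(s,t) and (L̂_d ψ̂_i)(s,t) = 0 for all s ∈ ℝ and t > 0. -/
/-!
With `q = d(t) - s` and `z = q / (2√(εt))`, the operator `L̂_d` acts on functions of `(q, t)` as
the heat operator `∂ₜ - ε ∂_q²`, because `â(d(t), t) = d'(t)`. The functions `ψ̂₀ = erfc z` and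
`ψ̂₁ = -2√(εt) · ierfc z` are classical heat solutions. For every `n`,
`ψ̂_{n+1} = q ψ̂_n - 2εt ∂ₛψ̂_n`, which propagates `∂ₛψ̂_{n+1} = -(n+1) ψ̂_n` along `n`. Finally
`L̂_d (q F) = q L̂_d F + 2ε ∂ₛF` and `L̂_d (t F) = t L̂_d F + F`, so the recursion gives
`L̂_d ψ̂_{n+2} = 2ε (∂ₛψ̂_{n+1} + (n+1) ψ̂_n) = 0` once `ψ̂_{n+1}` and `ψ̂_n` are annihilated.
-/

/-- The complementary error function `erfc z = (2/√π) ∫_z^∞ e^{-u²} du`. -/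
noncomputable def erfc (z : ℝ) : ℝ :=
  (2 / Real.sqrt Real.pi) * ∫ u in Set.Ioi z, Real.exp (-u ^ 2)

/-- `ψ̂₀(s,t) = erfc((d(t)-s)/(2√(εt)))`. -/
noncomputable def psi0 (ε : ℝ) (d : ℝ → ℝ) (s t : ℝ) : ℝ :=
  erfc ((d t - s) / (2 * Real.sqrt (ε * t)))

/-- `Ê(s,t) = exp(-(s-d(t))²/(4εt))`. -/
noncomputable def Ehat (ε : ℝ) (d : ℝ → ℝ) (s t : ℝ) : ℝ :=
  Real.exp (-(s - d t) ^ 2 / (4 * ε * t))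

/-- The operator `L̂_d F = -ε F_ss + â(d(t),t) F_s + F_t`. -/
noncomputable def Ld (ε : ℝ) (a : ℝ → ℝ → ℝ) (d : ℝ → ℝ) (F : ℝ → ℝ → ℝ) (s t : ℝ) : ℝ :=
  -ε * iteratedDeriv 2 (fun x => F x t) s
    + a (d t) t * deriv (fun x => F x t) s
    + deriv (fun τ => F s τ) t

/-- The family of singular functions: `psih 0 = psi0`,
`psih 1 s t = (d t - s) * psi0 s t - 2 sqrt(εt/π) Ehat s t`, and recursively
`psih (i+2) s t = (d t - s) * psih (i+1) s t + 2εt(i+1) * psih i s t`. -/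
noncomputable def psih (ε : ℝ) (d : ℝ → ℝ) : ℕ → ℝ → ℝ → ℝ
  | 0 => psi0 ε d
  | 1 => fun s t => (d t - s) * psi0 ε d s t - 2 * Real.sqrt (ε * t / Real.pi) * Ehat ε d s t
  | n + 2 => fun s t =>
      (d t - s) * psih ε d (n + 1) s t + 2 * ε * t * (n + 1) * psih ε d n s t

open Real Topology MeasureTheory

theorem hasDerivAt_erfc (z : ℝ) :
    HasDerivAt erfc (-(2 / √π) * exp (-z ^ 2)) z := by
  have hint : Integrable (fun u : ℝ => exp (-u ^ 2)) := by
    simpa using integrable_exp_neg_mul_sq one_pos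
  have hcont : Continuous (fun u : ℝ => exp (-u ^ 2)) := by fun_prop
  have herfc : erfc = fun y => (2 / √π) *
      ((∫ u in Set.Ioi 0, exp (-u ^ 2)) - ∫ u in (0 : ℝ)..y, exp (-u ^ 2)) := by
    funext y
    rw [← intervalIntegral.integral_Ioi_sub_Ioi' hint.integrableOn hint.integrableOn, sub_sub_cancel,
      erfc]
  have H : HasDerivAt (fun y => (2 / √π) *
      ((∫ u in Set.Ioi 0, exp (-u ^ 2)) - ∫ u in (0 : ℝ)..y, exp (-u ^ 2)))
      ((2 / √π) * (0 - exp (-z ^ 2))) z :=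
    ((hasDerivAt_const z _).sub (intervalIntegral.integral_hasDerivAt_right
      hint.intervalIntegrable (hcont.stronglyMeasurableAtFilter _ _) hcont.continuousAt)).const_mul _
  rw [herfc]
  exact H.congr_deriv (by ring)

/-- `ierfc z = ∫_z^∞ erfc`, the first iterated integral of `erfc`. -/
noncomputable def ierfc (z : ℝ) : ℝ :=
  exp (-z ^ 2) / √π - z * erfc z

theorem hasDerivAt_ierfc (z : ℝ) : HasDerivAt ierfc (-erfc z) z := by
  have hexp : HasDerivAt (fun y => exp (-y ^ 2)) (exp (-z ^ 2) * -(2 * z)) z := by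
    simpa using ((hasDerivAt_pow 2 z).neg).exp
  refine ((hexp.div_const √π).sub ((hasDerivAt_id' z).mul (hasDerivAt_erfc z))).congr_deriv ?_
  field_simp
  ring

theorem hasDerivAt_sqrt_const_mul {ε t : ℝ} (h : 0 < ε * t) :
    HasDerivAt (fun τ => √(ε * τ)) (√(ε * t) / (2 * t)) t := by
  have ht : t ≠ 0 := right_ne_zero_of_mul h.ne'
  have hr : 0 < √(ε * t) := sqrt_pos.2 h
  refine (((hasDerivAt_id t).const_mul ε).sqrt h.ne').congr_deriv ?_
  field_simp
  simp only [id]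
  rw [div_eq_iff hr.ne', mul_self_sqrt h.le]

variable {ε : ℝ} {d : ℝ → ℝ}

noncomputable def similarityVar (ε : ℝ) (d : ℝ → ℝ) (s t : ℝ) : ℝ :=
  (d t - s) / (2 * √(ε * t))

theorem sub_eq_mul_similarityVar {t : ℝ} (h : 0 < ε * t) (s : ℝ) :
    d t - s = 2 * √(ε * t) * similarityVar ε d s t := by
  rw [similarityVar]
  field_simp

theorem Ehat_eq_exp_similarityVar {t : ℝ} (h : 0 < ε * t) (s : ℝ) :
    Ehat ε d s t = exp (-similarityVar ε d s t ^ 2) := by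
  rw [Ehat, similarityVar, div_pow, mul_pow, sq_sqrt h.le, ← neg_sq (s - d t), neg_sub]
  ring_nf

theorem psih_one_eq_ierfc {t : ℝ} (h : 0 < ε * t) (s : ℝ) :
    psih ε d 1 s t = -(2 * √(ε * t)) * ierfc (similarityVar ε d s t) := by
  show (d t - s) * erfc (similarityVar ε d s t) - 2 * √(ε * t / π) * Ehat ε d s t = _
  rw [Ehat_eq_exp_similarityVar h, sqrt_div h.le, sub_eq_mul_similarityVar h s, ierfc]
  field_simp
  ring

theorem hasDerivAt_similarityVar_s (s t : ℝ) :
    HasDerivAt (fun x => similarityVar ε d x t) (-1 / (2 * √(ε * t))) s :=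
  ((hasDerivAt_id' s).const_sub (d t)).div_const (2 * √(ε * t))

theorem hasDerivAt_similarityVar_t {t A : ℝ} (h : 0 < ε * t) (hd : HasDerivAt d A t) (s : ℝ) :
    HasDerivAt (fun τ => similarityVar ε d s τ)
      (A / (2 * √(ε * t)) - similarityVar ε d s t / (2 * t)) t := by
  refine ((hd.sub_const s).div ((hasDerivAt_sqrt_const_mul h).const_mul 2) (by positivity)).congr_deriv
    ?_
  rw [similarityVar]
  field_simp

/-- `psihDs ε d n` and `psihDss ε d n` are the first and second `s`-derivatives of `psih ε d n`;
for `n = 0` they come from the heat kernel `e^{-z²}/√(πεt)`, `z = similarityVar ε d s t`. -/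
noncomputable def psihDs (ε : ℝ) (d : ℝ → ℝ) : ℕ → ℝ → ℝ → ℝ
  | 0 => fun s t => exp (-similarityVar ε d s t ^ 2) / (√π * √(ε * t))
  | n + 1 => fun s t => -(n + 1) * psih ε d n s t

noncomputable def psihDss (ε : ℝ) (d : ℝ → ℝ) : ℕ → ℝ → ℝ → ℝ
  | 0 => fun s t => (d t - s) / (2 * (ε * t)) * psihDs ε d 0 s t
  | n + 1 => fun s t => -(n + 1) * psihDs ε d n s t

theorem psih_add_two (n : ℕ) (s t : ℝ) :
    psih ε d (n + 2) s t = (d t - s) * psih ε d (n + 1) s t + 2 * ε * t * (n + 1) * psih ε d n s t :=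
  rfl

theorem psihDs_succ (n : ℕ) (s t : ℝ) : psihDs ε d (n + 1) s t = -(n + 1) * psih ε d n s t :=
  rfl

theorem psihDss_succ (n : ℕ) (s t : ℝ) : psihDss ε d (n + 1) s t = -(n + 1) * psihDs ε d n s t :=
  rfl

section
variable {t : ℝ} (h : 0 < ε * t)
include h

theorem psih_succ_eq (n : ℕ) (s : ℝ) :
    psih ε d (n + 1) s t = (d t - s) * psih ε d n s t - 2 * (ε * t) * psihDs ε d n s t := by
  cases n with
  | zero =>
    show _ = (d t - s) * erfc (similarityVar ε d s t) - _
    rw [psih_one_eq_ierfc h, ierfc, sub_eq_mul_similarityVar h s, psihDs]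
    field_simp
    rw [sq_sqrt h.le]
    ring
  | succ n =>
    rw [psih_add_two, psihDs_succ]
    ring

theorem two_mul_psihDss (n : ℕ) (s : ℝ) :
    2 * (ε * t) * psihDss ε d n s t = (d t - s) * psihDs ε d n s t + n * psih ε d n s t := by
  cases n with
  | zero =>
    rw [psihDss, ← mul_assoc, mul_div_cancel₀ _ (by positivity), Nat.cast_zero, zero_mul, add_zero]
  | succ n =>
    rw [psihDss_succ, psihDs_succ]
    push_cast
    linear_combination -(n + 1 : ℝ) * psih_succ_eq (d := d) h n s

theorem hasDerivAt_psih_zero_s (s : ℝ) :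
    HasDerivAt (fun x => psih ε d 0 x t) (psihDs ε d 0 s t) s := by
  refine ((hasDerivAt_erfc _).comp s (hasDerivAt_similarityVar_s s t)).congr_deriv ?_
  rw [psihDs]
  field_simp

theorem hasDerivAt_psihDs_zero_s (s : ℝ) :
    HasDerivAt (fun x => psihDs ε d 0 x t) (psihDss ε d 0 s t) s := by
  have hexp : HasDerivAt (fun x => exp (-similarityVar ε d x t ^ 2) / (√π * √(ε * t)))
      (exp (-similarityVar ε d s t ^ 2) * -(2 * similarityVar ε d s t * (-1 / (2 * √(ε * t))))
        / (√π * √(ε * t))) s := by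
    simpa using (((hasDerivAt_similarityVar_s s t).pow 2).neg.exp).div_const (√π * √(ε * t))
  refine hexp.congr_deriv ?_
  show _ = (d t - s) / (2 * (ε * t)) * (exp (-similarityVar ε d s t ^ 2) / (√π * √(ε * t)))
  rw [sub_eq_mul_similarityVar h s]
  field_simp [left_ne_zero_of_mul h.ne', right_ne_zero_of_mul h.ne']
  rw [sq_sqrt h.le]
  ring

theorem hasDerivAt_psih_s_and_psihDs_s (n : ℕ) :
    (∀ s, HasDerivAt (fun x => psih ε d n x t) (psihDs ε d n s t) s) ∧
      ∀ s, HasDerivAt (fun x => psihDs ε d n x t) (psihDss ε d n s t) s := by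
  induction n with
  | zero => exact ⟨hasDerivAt_psih_zero_s h, hasDerivAt_psihDs_zero_s h⟩
  | succ n ih =>
    obtain ⟨hψ, hDs⟩ := ih
    refine ⟨fun s => ?_, fun s => (hψ s).const_mul (-(n + 1 : ℝ))⟩
    rw [funext (psih_succ_eq h n ·)]
    refine ((((hasDerivAt_id' s).const_sub (d t)).mul (hψ s)).sub
      ((hDs s).const_mul (2 * (ε * t)))).congr_deriv ?_
    rw [psihDs_succ]
    linear_combination -two_mul_psihDss (d := d) h n s

theorem hasDerivAt_psih_s (n : ℕ) (s : ℝ) :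
    HasDerivAt (fun x => psih ε d n x t) (psihDs ε d n s t) s :=
  (hasDerivAt_psih_s_and_psihDs_s h n).1 s

theorem hasDerivAt_psihDs_s (n : ℕ) (s : ℝ) :
    HasDerivAt (fun x => psihDs ε d n x t) (psihDss ε d n s t) s :=
  (hasDerivAt_psih_s_and_psihDs_s h n).2 s

end

section
variable {t A : ℝ} (h : 0 < ε * t) (hd : HasDerivAt d A t)
include h hd

theorem hasDerivAt_psih_zero_t (s : ℝ) :
    HasDerivAt (fun τ => psih ε d 0 s τ) (-A * psihDs ε d 0 s t + ε * psihDss ε d 0 s t) t := by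
  refine ((hasDerivAt_erfc _).comp t (hasDerivAt_similarityVar_t h hd s)).congr_deriv ?_
  show _ = _ + ε * ((d t - s) / (2 * (ε * t)) * (exp (-similarityVar ε d s t ^ 2) / (√π * √(ε * t))))
  rw [psihDs, sub_eq_mul_similarityVar h s]
  field_simp [left_ne_zero_of_mul h.ne', right_ne_zero_of_mul h.ne']
  ring

theorem hasDerivAt_psih_one_t (s : ℝ) :
    HasDerivAt (fun τ => psih ε d 1 s τ) (-A * psihDs ε d 1 s t + ε * psihDss ε d 1 s t) t := by
  have hpos : ∀ᶠ τ in 𝓝 t, 0 < ε * τ := ((continuous_const_mul ε).tendsto t).eventually (lt_mem_nhds h)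
  set z := similarityVar ε d s t
  have hierfc : HasDerivAt (fun τ => -(2 * √(ε * τ)) * ierfc (similarityVar ε d s τ))
      (-(2 * (√(ε * t) / (2 * t))) * ierfc z
        + -(2 * √(ε * t)) * (-erfc z * (A / (2 * √(ε * t)) - z / (2 * t)))) t :=
    ((hasDerivAt_sqrt_const_mul h).const_mul 2).neg.mul
      ((hasDerivAt_ierfc _).comp t (hasDerivAt_similarityVar_t h hd s))
  refine (hierfc.congr_of_eventuallyEq (hpos.mono fun τ hτ => psih_one_eq_ierfc hτ s)).congr_deriv ?_
  show _ = -A * (-((0 : ℕ) + 1) * erfc z) + ε * (-((0 : ℕ) + 1) * (exp (-z ^ 2) / (√π * √(ε * t))))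
  rw [ierfc]
  field_simp [left_ne_zero_of_mul h.ne', right_ne_zero_of_mul h.ne']
  push_cast
  linear_combination -exp (-z ^ 2) * sq_sqrt h.le

theorem hasDerivAt_psih_add_two_t {n : ℕ} (s : ℝ)
    (h₁ : HasDerivAt (fun τ => psih ε d (n + 1) s τ)
      (-A * psihDs ε d (n + 1) s t + ε * psihDss ε d (n + 1) s t) t)
    (h₀ : HasDerivAt (fun τ => psih ε d n s τ) (-A * psihDs ε d n s t + ε * psihDss ε d n s t) t) :
    HasDerivAt (fun τ => psih ε d (n + 2) s τ)
      (-A * psihDs ε d (n + 2) s t + ε * psihDss ε d (n + 2) s t) t := by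
  have hcoef : HasDerivAt (fun τ : ℝ => 2 * ε * τ * (n + 1)) (2 * ε * (n + 1)) t := by
    simpa using ((hasDerivAt_id t).const_mul (2 * ε)).mul_const ((n : ℝ) + 1)
  refine (((hd.sub_const s).mul h₁).add (hcoef.mul h₀)).congr_deriv ?_
  simp only [psihDss_succ, psihDs_succ]
  push_cast
  linear_combination (-A * (n + 1)) * psih_succ_eq (d := d) h n s +
    (ε * (n + 1)) * two_mul_psihDss (d := d) h n s

end

theorem hasDerivAt_psih_t {t A : ℝ} (h : 0 < ε * t) (hd : HasDerivAt d A t) (n : ℕ) (s : ℝ) :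
    HasDerivAt (fun τ => psih ε d n s τ) (-A * psihDs ε d n s t + ε * psihDss ε d n s t) t := by
  induction n using Nat.twoStepInduction with
  | zero => exact hasDerivAt_psih_zero_t h hd s
  | one => exact hasDerivAt_psih_one_t h hd s
  | more n h₀ h₁ => exact hasDerivAt_psih_add_two_t h hd s h₁ h₀

theorem Ld_psih_eq_zero {a : ℝ → ℝ → ℝ} {t : ℝ} (h : 0 < ε * t) (hd : HasDerivAt d (a (d t) t) t)
    (n : ℕ) (s : ℝ) : Ld ε a d (psih ε d n) s t = 0 := by
  have hDs : deriv (fun x => psih ε d n x t) = fun x => psihDs ε d n x t :=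
    funext fun x => (hasDerivAt_psih_s h n x).deriv
  rw [Ld, iteratedDeriv_succ, iteratedDeriv_one, hDs, (hasDerivAt_psihDs_s h n s).deriv,
    (hasDerivAt_psih_t h hd n s).deriv]
  ring

theorem stmt_5_general
    (ε : ℝ) (hε : 0 < ε)
    (a : ℝ → ℝ → ℝ)
    (d : ℝ → ℝ)
    (hdODE : ∀ t : ℝ, 0 ≤ t → HasDerivAt d (a (d t) t) t) :
    ∀ i : ℕ, i ∈ ({2, 3, 4} : Set ℕ) → ∀ s t : ℝ, 0 < t →
      deriv (fun x => psih ε d i x t) s = -(i : ℝ) * psih ε d (i - 1) s t ∧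
      Ld ε a d (psih ε d i) s t = 0 := by
  intro i hi s t ht
  have h : 0 < ε * t := mul_pos hε ht
  refine ⟨?_, Ld_psih_eq_zero h (hdODE t ht.le) i s⟩
  obtain ⟨n, rfl⟩ : ∃ n, i = n + 1 := ⟨i - 1, by rcases hi with rfl | rfl | rfl <;> rfl⟩
  rw [(hasDerivAt_psih_s h (n + 1) s).deriv, psihDs_succ, Nat.add_sub_cancel, Nat.cast_succ]

/-- for each `i ∈ {2,3,4}`, `∂(psih i)/∂s = -i * psih (i-1)` and
`Ld (psih i) = 0`, for all `s : ℝ` and `t > 0`. -/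
theorem stmt_5
    (ε d₀ : ℝ) (hε : 0 < ε) (hd₀ : d₀ ∈ Set.Ioo (0 : ℝ) 1)
    (a : ℝ → ℝ → ℝ) (haC1 : ContDiff ℝ 1 (fun p : ℝ × ℝ => a p.1 p.2))
    (hapos : ∀ s t : ℝ, 0 ≤ t → 0 < a s t)
    (d : ℝ → ℝ) (hdC1 : ContDiff ℝ 1 d)
    (hdODE : ∀ t : ℝ, 0 ≤ t → HasDerivAt d (a (d t) t) t)
    (hd0 : d 0 = d₀) :
    ∀ i : ℕ, i ∈ ({2, 3, 4} : Set ℕ) → ∀ s t : ℝ, 0 < t →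
      deriv (fun x => psih ε d i x t) s = -(i : ℝ) * psih ε d (i - 1) s t ∧
      Ld ε a d (psih ε d i) s t = 0 :=
  stmt_5_general ε hε a d hdODE
end

section
/- For all s ∈ ℝ and t > 0, L̂_d applied to the function (s,t) ↦ t√t (d(t)−s) Ê(s,t) equals 3 (d(t)−s) √t Ê(s,t). -/
open Real

theorem hasDerivAt_mul_sqrt_self {t : ℝ} (ht : 0 < t) :
    HasDerivAt (fun τ => τ * √τ) (3 / 2 * √t) t :=
  ((hasDerivAt_id' t).mul (hasDerivAt_sqrt ht.ne')).congr_deriv <| by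
    field_simp
    rw [sq_sqrt ht.le]
    ring

section Gaussian

variable (ε : ℝ) (d : ℝ → ℝ)

theorem hasDerivAt_Ehat_space (x t : ℝ) :
    HasDerivAt (fun y => Ehat ε d y t) ((d t - x) / (2 * ε * t) * Ehat ε d x t) x := by
  have h := ((((hasDerivAt_id x).sub_const (d t)).pow 2).neg.div_const (4 * ε * t)).exp
  refine h.congr_deriv ?_
  rw [Ehat, mul_comm]
  congr 1
  rw [show (4 : ℝ) * ε * t = 2 * (2 * ε * t) by ring, ← mul_div_mul_left (d t - x) _ two_ne_zero]
  simp only [id, Nat.cast_ofNat]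
  ring

theorem HasDerivAt.mul_Ehat_space {f : ℝ → ℝ} {f' x : ℝ} (t : ℝ) (hf : HasDerivAt f f' x) :
    HasDerivAt (fun y => f y * Ehat ε d y t)
      ((f' + f x * ((d t - x) / (2 * ε * t))) * Ehat ε d x t) x :=
  (hf.mul (hasDerivAt_Ehat_space ε d x t)).congr_deriv (by ring)

variable {ε d}

theorem hasDerivAt_Ehat_time (hε : ε ≠ 0) {s t d' : ℝ} (ht : t ≠ 0) (hd : HasDerivAt d d' t) :
    HasDerivAt (fun τ => Ehat ε d s τ)
      (((d t - s) ^ 2 / (4 * ε * t ^ 2) - (d t - s) * d' / (2 * ε * t)) * Ehat ε d s t) t := by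
  have hnum := (((hasDerivAt_const t s).sub hd).pow 2).neg
  have hden := (hasDerivAt_id t).const_mul (4 * ε)
  have h := (hnum.div hden (by simp [hε, ht])).exp
  refine h.congr_deriv ?_
  rw [Ehat, mul_comm]
  congr 1
  simp only [Pi.neg_apply, Pi.pow_apply, Pi.sub_apply, id]
  field_simp
  ring

end Gaussian

theorem stmt_9_general
    (ε : ℝ) (hε : 0 < ε) (a : ℝ → ℝ → ℝ) (d : ℝ → ℝ)
    (hdODE : ∀ t : ℝ, 0 ≤ t → HasDerivAt d (a (d t) t) t) :
    ∀ s t : ℝ, 0 < t →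
      Ld ε a d (fun s' t' => t' * Real.sqrt t' * (d t' - s') * Ehat ε d s' t') s t
        = 3 * (d t - s) * Real.sqrt t * Ehat ε d s t := by
  intro s t ht
  have hε₀ := hε.ne'
  have ht₀ := ht.ne'
  have hd := hdODE t ht.le
  have hFs (x : ℝ) : HasDerivAt (fun y => t * √t * (d t - y) * Ehat ε d y t)
      (t * √t * ((d t - x) ^ 2 / (2 * ε * t) - 1) * Ehat ε d x t) x :=
    ((((hasDerivAt_id' x).const_sub (d t)).const_mul (t * √t)).mul_Ehat_space ε d t).congr_deriv
      (by field_simp; ring)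
  have hFss : HasDerivAt (fun y => t * √t * ((d t - y) ^ 2 / (2 * ε * t) - 1) * Ehat ε d y t)
      (t * √t * (d t - s) * ((d t - s) ^ 2 / (4 * ε ^ 2 * t ^ 2) - 3 / (2 * ε * t)) *
        Ehat ε d s t) s :=
    (((((hasDerivAt_id' s).const_sub (d t)).pow 2).div_const (2 * ε * t) |>.sub_const 1
      |>.const_mul (t * √t)).mul_Ehat_space ε d t).congr_deriv
      (by simp only [Pi.pow_apply]; field_simp; ring)
  have hFt : HasDerivAt (fun τ => τ * √τ * (d τ - s) * Ehat ε d s τ)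
      (√t * (3 / 2 * (d t - s) + t * a (d t) t + t * (d t - s) *
        ((d t - s) ^ 2 / (4 * ε * t ^ 2) - (d t - s) * a (d t) t / (2 * ε * t))) *
        Ehat ε d s t) t :=
    (((hasDerivAt_mul_sqrt_self ht).mul (hd.sub_const s)).mul
      (hasDerivAt_Ehat_time hε₀ ht₀ hd)).congr_deriv
      (by simp only [Pi.mul_apply]; field_simp)
  rw [Ld, iteratedDeriv_succ, iteratedDeriv_one, funext fun x => (hFs x).deriv, hFss.deriv,
    hFt.deriv]
  field_simp
  ring

/-- `Ld` applied to `(s,t) ↦ t sqrt t (d t - s) Ehat s t` equals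
`3 (d t - s) sqrt t Ehat s t`, for all `s : ℝ` and `t > 0`. -/
theorem stmt_9
    (ε d₀ : ℝ) (hε : 0 < ε) (hd₀ : d₀ ∈ Set.Ioo (0 : ℝ) 1)
    (a : ℝ → ℝ → ℝ) (haC1 : ContDiff ℝ 1 (fun p : ℝ × ℝ => a p.1 p.2))
    (hapos : ∀ s t : ℝ, 0 ≤ t → 0 < a s t)
    (d : ℝ → ℝ) (hdC1 : ContDiff ℝ 1 d)
    (hdODE : ∀ t : ℝ, 0 ≤ t → HasDerivAt d (a (d t) t) t)
    (hd0 : d 0 = d₀) :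
    ∀ s t : ℝ, 0 < t →
      Ld ε a d (fun s' t' => t' * Real.sqrt t' * (d t' - s') * Ehat ε d s' t') s t
        = 3 * (d t - s) * Real.sqrt t * Ehat ε d s t :=
  stmt_9_general ε hε a d hdODE
end
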